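/- arXiv:2505.15201 — 7 statements merged into one kernel-verified Lean document; each statement's English description precedes it below -/
import Mathlib

section
/- Let X be a measurable space, μ a probability measure on X, f : X → {0,1} a measurable function, and p = μ({x : f(x) = 1}). For natural numbers 1 ≤ k ≤ n, the integral over x = (x₁,...,xₙ) ∈ Xⁿ, with respect to the n-fold product measure μⁿ, of ρ(n, c(x), k) equals 1 − (1−p)^k, where c(x) = #{i : f(xᵢ) = 1}. In other words, ρ(n, c, k) is an unbiased estimator of pass@k. -/
/-!
`C(n - c, k)` counts the `k`-subsets `T` of the samples on which every sample fails, so it is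
the sum over `k`-subsets `T` of `∏ i ∈ T, 1[f xᵢ = false]`. Under the product measure each such
product has expectation `(1 - p) ^ k`, hence `E[C(n - c, k)] = C(n, k) (1 - p) ^ k`.
-/

open MeasureTheory Finset

theorem Finset.choose_card_filter_eq_sum_prod {α R : Type*} [CommSemiring R] (s : Finset α)
    (P : α → Prop) [DecidablePred P] (k : ℕ) :
    ((#(s.filter P)).choose k : R) = ∑ T ∈ s.powersetCard k, ∏ i ∈ T, if P i then 1 else 0 := by
  have : (s.filter P).powersetCard k = (s.powersetCard k).filter fun T ↦ ∀ i ∈ T, P i := by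
    ext T
    simp only [mem_powersetCard, mem_filter, subset_iff]
    grind
  simp_rw [prod_boole, ← card_powersetCard, this, sum_boole]

theorem Finset.choose_card_filter_mem_eq_sum_prod_indicator {ι X R : Type*} [Fintype ι]
    [CommSemiring R] (s : Set X) [DecidablePred (· ∈ s)] (k : ℕ) (x : ι → X) :
    ((#(univ.filter fun i ↦ x i ∈ s)).choose k : R)
      = ∑ T ∈ univ.powersetCard k, ∏ i ∈ T, s.indicator 1 (x i) := by
  simp_rw [choose_card_filter_eq_sum_prod, Set.indicator_apply, Pi.one_apply]

namespace MeasureTheory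

variable {ι X 𝕜 : Type*} [Fintype ι] [MeasurableSpace X] [RCLike 𝕜] (μ : Measure X)

theorem Integrable.finset_prod_eval [IsFiniteMeasure μ] {g : X → 𝕜} (hg : Integrable g μ)
    (T : Finset ι) :
    Integrable (fun x : ι → X ↦ ∏ i ∈ T, g (x i)) (Measure.pi fun _ ↦ μ) := by
  classical
  simp_rw [← prod_ite_mem_eq T]
  exact .fintype_prod (f := fun i y ↦ if i ∈ T then g y else 1) fun i ↦ by
    split_ifs
    exacts [hg, integrable_const 1]

theorem integral_finset_prod_eval_eq_pow [IsProbabilityMeasure μ] (g : X → 𝕜) (T : Finset ι) :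
    ∫ x : ι → X, ∏ i ∈ T, g (x i) ∂Measure.pi (fun _ ↦ μ) = (∫ y, g y ∂μ) ^ #T := by
  classical
  have hfactor (i : ι) :
      ∫ y, (if i ∈ T then g y else 1) ∂μ = if i ∈ T then ∫ y, g y ∂μ else 1 := by
    split_ifs <;> simp
  simp_rw [← prod_ite_mem_eq T]
  rw [integral_fintype_prod_eq_prod (fun i y ↦ if i ∈ T then g y else 1)]
  simp_rw [hfactor, prod_ite_mem_eq, prod_const]

theorem integrable_choose_card_filter_mem [IsFiniteMeasure μ] {s : Set X}
    (hs : MeasurableSet s) [DecidablePred (· ∈ s)] (k : ℕ) :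
    Integrable (fun x : ι → X ↦ ((#(univ.filter fun i ↦ x i ∈ s)).choose k : ℝ))
      (Measure.pi fun _ ↦ μ) := by
  have hind : Integrable (s.indicator (1 : X → ℝ)) μ := (integrable_const 1).indicator hs
  simp_rw [choose_card_filter_mem_eq_sum_prod_indicator]
  exact integrable_finsetSum _ fun T _ ↦ hind.finset_prod_eval μ T

theorem integral_choose_card_filter_mem [IsProbabilityMeasure μ] {s : Set X}
    (hs : MeasurableSet s) [DecidablePred (· ∈ s)] (k : ℕ) :
    ∫ x : ι → X, ((#(univ.filter fun i ↦ x i ∈ s)).choose k : ℝ) ∂Measure.pi (fun _ ↦ μ)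
      = (Fintype.card ι).choose k * μ.real s ^ k := by
  have hind : Integrable (s.indicator (1 : X → ℝ)) μ := (integrable_const 1).indicator hs
  simp_rw [choose_card_filter_mem_eq_sum_prod_indicator]
  rw [integral_finsetSum _ fun T _ ↦ hind.finset_prod_eval μ T]
  simp_rw [integral_finset_prod_eval_eq_pow, integral_indicator_one hs]
  rw [sum_congr rfl fun T hT ↦ by rw [(mem_powersetCard.1 hT).2], sum_const, card_powersetCard,
    card_univ, nsmul_eq_mul]

end MeasureTheory

theorem rho_unbiased_passk_general {X : Type*} [MeasurableSpace X] (μ : Measure X)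
    [IsProbabilityMeasure μ] (f : X → Bool) (hf : Measurable f)
    (n k : ℕ) (hkn : k ≤ n)
    (p : ℝ) (hp : p = (μ {x | f x = true}).toReal) :
    ∫ x : Fin n → X,
        (1 - ((n - (Finset.univ.filter fun i => f (x i) = true).card).choose k : ℝ)
              / (n.choose k : ℝ))
      ∂(Measure.pi fun _ : Fin n => μ)
      = 1 - (1 - p) ^ k := by
  have hfalse : MeasurableSet {y | f y = false} := hf (measurableSet_singleton false)
  have hcount (x : Fin n → X) : n - #(univ.filter fun i ↦ f (x i) = true)
      = #(univ.filter fun i ↦ x i ∈ {y | f y = false}) := by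
    have hsplit := card_filter_add_card_filter_not (s := univ) fun i ↦ f (x i) = true
    simp only [card_univ, Fintype.card_fin, Bool.not_eq_true] at hsplit
    simp only [Set.mem_ofPred_eq]
    omega
  have hmiss : μ.real {y | f y = false} = 1 - p := by
    have htrue : MeasurableSet {y | f y = true} := hf (measurableSet_singleton true)
    rw [hp, ← measureReal_def, ← probReal_compl_eq_one_sub htrue]
    simp [Set.compl_ofPred]
  have hchoose : (n.choose k : ℝ) ≠ 0 := by exact_mod_cast (Nat.choose_pos hkn).ne'
  simp_rw [hcount]
  rw [integral_sub (integrable_const 1)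
      ((integrable_choose_card_filter_mem μ hfalse k).div_const _),
    integral_div, integral_choose_card_filter_mem μ hfalse, hmiss]
  simp [Fintype.card_fin, hchoose]

/-- ρ(n, c, k) = 1 − C(n−c,k)/C(n,k) is an unbiased estimator of
pass@k = 1 − (1−p)^k, where c(x) = #{i : f(xᵢ) = 1} for x ∈ Xⁿ distributed
according to the n-fold product of the probability measure μ, and
p = μ({x : f(x) = 1}). -/
theorem rho_unbiased_passk {X : Type*} [MeasurableSpace X] (μ : Measure X)
    [IsProbabilityMeasure μ] (f : X → Bool) (hf : Measurable f)
    (n k : ℕ) (hk : 1 ≤ k) (hkn : k ≤ n)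
    (p : ℝ) (hp : p = (μ {x | f x = true}).toReal) :
    ∫ x : Fin n → X,
        (1 - ((n - (Finset.univ.filter fun i => f (x i) = true).card).choose k : ℝ)
              / (n.choose k : ℝ))
      ∂(Measure.pi fun _ : Fin n => μ)
      = 1 - (1 - p) ^ k :=
  rho_unbiased_passk_general μ f hf n k hkn p hp
end

section
/- For natural numbers 1 ≤ k ≤ n and every real number p, the following identity holds: ∑_{c=0}^{n} C(n, c) · p^c · (1−p)^{n−c} · (1 − C(n−c, k)/C(n, k)) = 1 − (1−p)^k. -/
/-!
Both sides are probabilities for `c ~ Binomial(n, p)`. Since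
`C(n, c) · C(n - c, k) = C(n, k) · C(n - k, c)`, the term subtracted in the `c`-th summand is
`C(n - k, c) p^c (1 - p)^(n - c)`, and these terms add up to `(1 - p)^k` by the binomial theorem
for the exponent `n - k`; the remaining terms add up to `(p + (1 - p))^n = 1`.
-/

open Finset

theorem Nat.choose_mul_choose_sub_comm (n c k : ℕ) :
    n.choose c * (n - c).choose k = n.choose k * (n - k).choose c := by
  -- both sides equal `C(n, c + k) · C(c + k, c)`
  have hc := Nat.choose_mul (n := n) (k := c + k) (s := c) (by omega)
  have hk := Nat.choose_mul (n := n) (k := c + k) (s := k) (by omega)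
  rw [Nat.add_sub_cancel_left] at hc
  rw [Nat.add_sub_cancel] at hk
  rw [← hc, ← hk, Nat.choose_symm_add]

theorem sum_range_choose_sub_mul_pow_mul_pow {R : Type*} [CommSemiring R] (x y : R) {n k : ℕ}
    (hkn : k ≤ n) :
    ∑ c ∈ range (n + 1), ((n - k).choose c : R) * x ^ c * y ^ (n - c) =
      (x + y) ^ (n - k) * y ^ k := by
  obtain ⟨m, rfl⟩ : ∃ m, n = m + k := ⟨n - k, by omega⟩
  rw [Nat.add_sub_cancel, add_pow, sum_mul]
  refine (sum_subset (range_subset_range.mpr (by omega)) fun c _ hc => ?_).symm.trans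
    (sum_congr rfl fun c hc => ?_)
  · rw [Nat.choose_eq_zero_of_lt (by simpa using hc)]
    simp
  · rw [show m + k - c = m - c + k by grind, pow_add]
    ring

theorem binomial_expectation_rho_eq_passk_general (n k : ℕ) (hkn : k ≤ n) (p : ℝ) :
    ∑ c ∈ Finset.range (n + 1),
        (n.choose c : ℝ) * p ^ c * (1 - p) ^ (n - c) *
          (1 - ((n - c).choose k : ℝ) / (n.choose k : ℝ))
      = 1 - (1 - p) ^ k := by
  have hnk : (n.choose k : ℝ) ≠ 0 := by exact_mod_cast (Nat.choose_pos hkn).ne'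
  have hterm : ∀ c ∈ range (n + 1),
      (n.choose c : ℝ) * p ^ c * (1 - p) ^ (n - c) *
          (1 - ((n - c).choose k : ℝ) / (n.choose k : ℝ))
        = (n.choose c : ℝ) * p ^ c * (1 - p) ^ (n - c)
          - ((n - k).choose c : ℝ) * p ^ c * (1 - p) ^ (n - c) := by
    intro c _
    have hchoose : (n.choose c : ℝ) * (n - c).choose k = n.choose k * (n - k).choose c := by
      exact_mod_cast Nat.choose_mul_choose_sub_comm n c k
    field_simp
    linear_combination -p ^ c * (1 - p) ^ (n - c) * hchoose
  have htotal := sum_range_choose_sub_mul_pow_mul_pow p (1 - p) (Nat.zero_le n)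
  rw [sum_congr rfl hterm, sum_sub_distrib, sum_range_choose_sub_mul_pow_mul_pow _ _ hkn,
    add_sub_cancel, one_pow, one_mul]
  simpa using htotal

/-- For natural numbers 1 ≤ k ≤ n and every real number p,
∑_{c=0}^{n} C(n, c) · p^c · (1−p)^{n−c} · (1 − C(n−c, k)/C(n, k)) = 1 − (1−p)^k. -/
theorem binomial_expectation_rho_eq_passk (n k : ℕ) (hk : 1 ≤ k) (hkn : k ≤ n) (p : ℝ) :
    ∑ c ∈ Finset.range (n + 1),
        (n.choose c : ℝ) * p ^ c * (1 - p) ^ (n - c) *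
          (1 - ((n - c).choose k : ℝ) / (n.choose k : ℝ))
      = 1 - (1 - p) ^ k :=
  binomial_expectation_rho_eq_passk_general n k hkn p
end

section
/- Let X be a nonempty finite type and p : ℝ → X → ℝ a parametrized family of probability mass functions (p(θ, x) > 0, ∑_{x∈X} p(θ, x) = 1, and θ ↦ p(θ, x) differentiable for each x). Let f : X → {0,1} and let 1 ≤ k ≤ n. Define pass@k(θ) = ∑_{x : Fin k → X} (∏_{i} p(θ, xᵢ)) · (1 − ∏_{i}(1 − f(xᵢ))). For a tuple x : Fin n → X, let c(x) = #{i : f(xᵢ) = 1} and define r_i(x) = k/n if f(xᵢ) = 1 and r_i(x) = (k/n)·ρ(n−1, c(x), k−1) if f(xᵢ) = 0. Then for every θ: ∑_{x : Fin n → X} (∏_{i} p(θ, xᵢ)) · ∑_{i=1}^{n} r_i(x) · (d/dθ p(θ, xᵢ))/p(θ, xᵢ) = d/dθ pass@k(θ). In other words, the estimator ∑_i r_i(x) ∇_θ log p(xᵢ|θ) is an unbiased estimator of the gradient of pass@k. -/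
/-!
Write `φ = ∑ₓ p(θ, x) (1 - f x)` for the probability of a failing sample, so that
pass@k = 1 - φᵏ and its derivative is `-k φᵏ⁻¹ φ'`. Swapping the two sums, the `i`-th term of the
estimator is the expectation of `rᵢ(x) ∂θ log p(θ, xᵢ)`; summing out `xᵢ = a` first leaves
`∑ₐ ∂θ p(θ, a) · E[rᵢ | xᵢ = a]`. For a failing `a`, `rᵢ` is `k/n` times `ρ(n-1, c, k-1)` computed
from the other `n - 1` samples, and `ρ(m, c, s)` is an unbiased estimator of pass@s, since
`C(m - c, s)` counts the `s`-subsets of failing samples. Hence `E[rᵢ | xᵢ = a] = (k/n)(1 - φᵏ⁻¹)`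
for failing `a` and `k/n` otherwise, and as `∑ₐ ∂θ p(θ, a) = 0` each `i` contributes
`-(k/n) φᵏ⁻¹ φ'`.
-/

/-- ρ(n, c, k) = 1 − C(n−c, k)/C(n, k), with the convention C(a,b) = 0 for b > a. -/
noncomputable def rho (n c k : ℕ) : ℝ := 1 - ((n - c).choose k : ℝ) / (n.choose k : ℝ)

open Finset

lemma sum_powersetCard_prod_boole {ι : Type*} [DecidableEq ι] (s : Finset ι) (P : ι → Prop)
    [DecidablePred P] (j : ℕ) :
    ∑ S ∈ s.powersetCard j, ∏ t ∈ S, (if P t then (1 : ℝ) else 0) = (#(s.filter P)).choose j := by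
  simp_rw [prod_boole, sum_boole]
  rw [← card_powersetCard]
  congr 2
  ext S
  simp only [mem_filter, mem_powersetCard, subset_iff]
  aesop

section Sampling

variable {X : Type*} [Fintype X] {ι : Type*} [Fintype ι] [DecidableEq ι]

lemma sum_pi_prod_mul_one_sub_prod (w g : X → ℝ) :
    ∑ y : ι → X, (∏ i, w (y i)) * (1 - ∏ i, g (y i))
      = (∑ x, w x) ^ Fintype.card ι - (∑ x, w x * g x) ^ Fintype.card ι := by
  simp_rw [mul_sub, mul_one, ← prod_mul_distrib, sum_sub_distrib,
    ← Fintype.prod_sum (fun _ x => w x), ← Fintype.prod_sum (fun _ x => w x * g x),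
    prod_const, card_univ]

lemma sum_pi_prod_of_sum_eq_one {w : X → ℝ} (hw : ∑ x, w x = 1) :
    ∑ y : ι → X, ∏ j, w (y j) = 1 := by
  rw [← Fintype.prod_sum (fun _ x => w x), hw, prod_const_one]

lemma sum_pi_prod_mul_prod_of_sum_eq_one {w : X → ℝ} (hw : ∑ x, w x = 1) (g : X → ℝ)
    (S : Finset ι) :
    ∑ y : ι → X, (∏ j, w (y j)) * ∏ t ∈ S, g (y t) = (∑ x, w x * g x) ^ #S := by
  have hsplit : ∀ y : ι → X, (∏ j, w (y j)) * ∏ t ∈ S, g (y t)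
      = ∏ j, w (y j) * if j ∈ S then g (y j) else 1 := by
    intro y
    rw [prod_mul_distrib, prod_ite_mem, univ_inter]
  simp_rw [hsplit, ← Fintype.prod_sum (fun j x => w x * if j ∈ S then g x else 1), mul_ite,
    mul_one, sum_ite_irrel, hw, prod_ite_mem, univ_inter, prod_const]

lemma sum_pi_prod_mul_choose_card_filter_not {w : X → ℝ} (hw : ∑ x, w x = 1)
    (good : X → Prop) [DecidablePred good] (s : ℕ) :
    ∑ y : ι → X, (∏ j, w (y j)) * (#{j | ¬good (y j)}).choose s
      = (Fintype.card ι).choose s * (∑ x, w x * if good x then 0 else 1) ^ s := by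
  simp_rw [← sum_powersetCard_prod_boole, mul_sum]
  rw [sum_comm]
  simp_rw [sum_pi_prod_mul_prod_of_sum_eq_one hw (fun x => if ¬good x then 1 else 0)]
  simp only [ite_not]
  rw [sum_congr rfl fun S hS => by rw [(mem_powersetCard.1 hS).2], sum_const, card_powersetCard,
    card_univ, nsmul_eq_mul]

lemma sum_pi_prod_mul_rho {w : X → ℝ} (hw : ∑ x, w x = 1) (good : X → Prop)
    [DecidablePred good] {s : ℕ} (hs : s ≤ Fintype.card ι) :
    ∑ y : ι → X, (∏ j, w (y j)) * rho (Fintype.card ι) #{j | good (y j)} s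
      = 1 - (∑ x, w x * if good x then 0 else 1) ^ s := by
  have hcard : ∀ y : ι → X, Fintype.card ι - #{j | good (y j)} = #{j | ¬good (y j)} := by
    intro y
    rw [← card_univ, ← card_filter_add_card_filter_not (s := univ) (fun j => good (y j))]
    omega
  have hchoose : ((Fintype.card ι).choose s : ℝ) ≠ 0 := by
    exact_mod_cast (Nat.choose_pos hs).ne'
  simp_rw [rho, hcard, mul_sub, mul_one, sum_sub_distrib, mul_div_assoc', ← sum_div,
    sum_pi_prod_mul_choose_card_filter_not hw, sum_pi_prod_of_sum_eq_one hw]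
  field_simp

lemma sum_pi_prod_mul_score {m : ℕ} {w : X → ℝ} (hw : ∀ x, w x ≠ 0) (w' : X → ℝ)
    (good : X → Prop) [DecidablePred good] (F : X → ℕ → ℝ) (i : Fin (m + 1)) :
    ∑ z : Fin (m + 1) → X, (∏ j, w (z j)) * (F (z i) #{j | good (z j)} * (w' (z i) / w (z i)))
      = ∑ a, w' a * ∑ y : Fin m → X,
          (∏ j, w (y j)) * F a (#{j | good (y j)} + if good a then 1 else 0) := by
  rw [← (Fin.insertNthEquiv (fun _ => X) i).sum_comp, Fintype.sum_prod_type]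
  refine sum_congr rfl fun a _ => ?_
  rw [mul_sum]
  refine sum_congr rfl fun y _ => ?_
  have hcard : #{j | good (Fin.insertNth (α := fun _ => X) i a y j)}
      = #{j | good (y j)} + if good a then 1 else 0 := by
    simp_rw [card_filter, Fin.sum_univ_succAbove _ i, Fin.insertNth_apply_same,
      Fin.insertNth_apply_succAbove, add_comm]
  simp only [Fin.insertNthEquiv_apply, Fin.prod_univ_succAbove _ i, Fin.insertNth_apply_same,
    Fin.insertNth_apply_succAbove, hcard]
  field_simp [hw a]

end Sampling

section Estimator

variable {X : Type*} [Fintype X] {w : X → ℝ} (good : X → Prop) [DecidablePred good] {m k : ℕ}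

lemma sum_pi_prod_mul_estimator_weight (hw : ∑ x, w x = 1) (hk : k ≤ m + 1) (a : X) :
    ∑ y : Fin m → X, (∏ j, w (y j)) *
      (if good a then (k : ℝ) / ↑(m + 1) else k / ↑(m + 1) *
        rho (m + 1 - 1) (#{j | good (y j)} + if good a then 1 else 0) (k - 1))
      = k / ↑(m + 1) * (1 - (if good a then 0 else 1) *
          (∑ x, w x * if good x then 0 else 1) ^ (k - 1)) := by
  by_cases ha : good a
  · simp [ha, ← sum_mul, sum_pi_prod_of_sum_eq_one hw]
  · have hrho := sum_pi_prod_mul_rho hw good (ι := Fin m) (s := k - 1)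
      (by rw [Fintype.card_fin]; omega)
    rw [Fintype.card_fin] at hrho
    simp_rw [if_neg ha, add_zero, Nat.add_sub_cancel, mul_left_comm _ (k / _ : ℝ), ← mul_sum,
      hrho, one_mul]

lemma sum_pi_prod_mul_estimator_score (hw : ∑ x, w x = 1) (hw₀ : ∀ x, w x ≠ 0)
    {w' : X → ℝ} (hw' : ∑ x, w' x = 0) (hk : k ≤ m + 1) (i : Fin (m + 1)) :
    ∑ z : Fin (m + 1) → X, (∏ j, w (z j)) *
      ((if good (z i) then (k : ℝ) / ↑(m + 1)
        else k / ↑(m + 1) * rho (m + 1 - 1) #{j | good (z j)} (k - 1)) * (w' (z i) / w (z i)))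
      = -(k / ↑(m + 1) * (∑ x, w x * if good x then 0 else 1) ^ (k - 1) *
          ∑ x, w' x * if good x then 0 else 1) := by
  refine (sum_pi_prod_mul_score hw₀ w' good (fun a c => if good a then (k : ℝ) / ↑(m + 1)
    else k / ↑(m + 1) * rho (m + 1 - 1) c (k - 1)) i).trans ?_
  simp_rw [sum_pi_prod_mul_estimator_weight good hw hk, mul_sub, mul_one, sum_sub_distrib,
    ← sum_mul, hw', zero_mul, zero_sub, neg_inj, mul_sum]
  exact sum_congr rfl fun x _ => by ring

end Estimator

section Derivatives

variable {X : Type*} [Fintype X] {p : ℝ → X → ℝ}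

lemma hasDerivAt_sum_mul (hdiff : ∀ x, Differentiable ℝ fun θ => p θ x) (c : X → ℝ) (θ : ℝ) :
    HasDerivAt (fun t => ∑ x, p t x * c x) (∑ x, deriv (fun t => p t x) θ * c x) θ :=
  HasDerivAt.fun_sum fun x _ => (hdiff x θ).hasDerivAt.mul_const (c x)

lemma sum_deriv_eq_zero (hdiff : ∀ x, Differentiable ℝ fun θ => p θ x)
    (hsum : ∀ θ, ∑ x, p θ x = 1) (θ : ℝ) : ∑ x, deriv (fun t => p t x) θ = 0 := by
  rw [← deriv_fun_sum fun x _ => hdiff x θ]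
  simp_rw [hsum, deriv_const]

lemma deriv_sum_pi_prod_mul_one_sub_prod {ι : Type*} [Fintype ι] [DecidableEq ι]
    (hdiff : ∀ x, Differentiable ℝ fun θ => p θ x) (hsum : ∀ θ, ∑ x, p θ x = 1)
    (g : X → ℝ) (θ : ℝ) :
    deriv (fun t => ∑ y : ι → X, (∏ i, p t (y i)) * (1 - ∏ i, g (y i))) θ
      = -(Fintype.card ι * (∑ x, p θ x * g x) ^ (Fintype.card ι - 1) *
          ∑ x, deriv (fun t => p t x) θ * g x) := by
  simp_rw [sum_pi_prod_mul_one_sub_prod, hsum, one_pow]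
  exact (((hasDerivAt_sum_mul hdiff g θ).pow _).const_sub 1).deriv

end Derivatives

theorem unbiased_passk_gradient_estimator_general {X : Type*} [Fintype X]
    (p : ℝ → X → ℝ)
    (hpos : ∀ θ x, 0 < p θ x)
    (hsum : ∀ θ, ∑ x, p θ x = 1)
    (hdiff : ∀ x, Differentiable ℝ fun θ => p θ x)
    (f : X → ℕ) (hf : ∀ x, f x = 0 ∨ f x = 1)
    (n k : ℕ) (hk : 1 ≤ k) (hkn : k ≤ n) (θ : ℝ) :
    ∑ x : Fin n → X, (∏ i, p θ (x i)) *
        ∑ i, (if f (x i) = 1 then (k : ℝ) / (n : ℝ)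
              else (k : ℝ) / (n : ℝ) *
                rho (n - 1) ((Finset.univ.filter fun j => f (x j) = 1).card) (k - 1)) *
          (deriv (fun t => p t (x i)) θ / p θ (x i))
      = deriv (fun t => ∑ y : Fin k → X,
          (∏ i, p t (y i)) * (1 - ∏ i, (1 - (f (y i) : ℝ)))) θ := by
  obtain ⟨m, rfl⟩ : ∃ m, n = m + 1 := ⟨n - 1, by omega⟩
  have hfail : ∀ x, 1 - (f x : ℝ) = if f x = 1 then 0 else 1 := fun x => by
    rcases hf x with h | h <;> simp [h]
  simp_rw [mul_sum]
  rw [sum_comm, sum_congr rfl fun i _ => sum_pi_prod_mul_estimator_score (fun x => f x = 1)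
    (hsum θ) (fun x => (hpos θ x).ne') (sum_deriv_eq_zero hdiff hsum θ) (by omega) i, sum_const,
    card_univ, Fintype.card_fin, nsmul_eq_mul,
    deriv_sum_pi_prod_mul_one_sub_prod hdiff hsum (fun x => 1 - (f x : ℝ)), Fintype.card_fin]
  simp_rw [hfail]
  field_simp

/-- The estimator ∑_i r_i(x) ∇_θ log p(xᵢ|θ), with
r_i(x) = k/n if f(xᵢ) = 1 and r_i(x) = (k/n)·ρ(n−1, c(x), k−1) if f(xᵢ) = 0,
where c(x) = #{i : f(xᵢ) = 1}, is an unbiased estimator of the gradient of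
pass@k(θ) = ∑_{x : Fin k → X} (∏ᵢ p(θ, xᵢ)) · (1 − ∏ᵢ(1 − f(xᵢ))). -/
theorem unbiased_passk_gradient_estimator {X : Type*} [Fintype X] [Nonempty X]
    (p : ℝ → X → ℝ)
    (hpos : ∀ θ x, 0 < p θ x)
    (hsum : ∀ θ, ∑ x, p θ x = 1)
    (hdiff : ∀ x, Differentiable ℝ fun θ => p θ x)
    (f : X → ℕ) (hf : ∀ x, f x = 0 ∨ f x = 1)
    (n k : ℕ) (hk : 1 ≤ k) (hkn : k ≤ n) (θ : ℝ) :
    ∑ x : Fin n → X, (∏ i, p θ (x i)) *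
        ∑ i, (if f (x i) = 1 then (k : ℝ) / (n : ℝ)
              else (k : ℝ) / (n : ℝ) *
                rho (n - 1) ((Finset.univ.filter fun j => f (x j) = 1).card) (k - 1)) *
          (deriv (fun t => p t (x i)) θ / p θ (x i))
      = deriv (fun t => ∑ y : Fin k → X,
          (∏ i, p t (y i)) * (1 - ∏ i, (1 - (f (y i) : ℝ)))) θ :=
  unbiased_passk_gradient_estimator_general p hpos hsum hdiff f hf n k hk hkn θ
end

section
/- Let X be a measurable space, μ a probability measure on X, and g : X → ℝ a bounded measurable function. For natural numbers 1 ≤ k ≤ n, the integral over (x₁,...,xₙ) ∈ Xⁿ, with respect to the n-fold product measure μⁿ, of (1/C(n,k)) · ∑_{I ⊆ {1,...,n}, |I| = k} max_{i∈I} g(xᵢ), equals the integral over (y₁,...,y_k) ∈ X^k, with respect to μ^k, of max_{1≤i≤k} g(yᵢ). In other words, the average over all k-subsets of the maximum reward is an unbiased estimator of maxg@k. -/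
open MeasureTheory

/-- The maximum of `g` over a finite index set `I` (equal to `max_{i ∈ I} g i`
whenever `I` is nonempty). -/
noncomputable def finsetMax {α : Type*} (I : Finset α) (g : α → ℝ) : ℝ :=
  WithBot.unbotD 0 (I.sup fun a => ((g a : ℝ) : WithBot ℝ))

/-! For every `k`-subset `I`, enumerating `I` increasingly shows that `(xᵢ)_{i ∈ I}` has law `μᵏ`
under `μⁿ`, so each of the `C(n, k)` summands has expectation maxg@k; linearity of the integral
(all summands are bounded) does the rest. -/

theorem measurePreserving_comp_of_injective {ι κ X : Type*} [Fintype ι] [Fintype κ]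
    [MeasurableSpace X] (μ : κ → Measure X) [∀ j, IsProbabilityMeasure (μ j)]
    {e : ι → κ} (he : Function.Injective e) :
    MeasurePreserving (fun (x : κ → X) (i : ι) => x (e i))
      (Measure.pi μ) (Measure.pi fun i => μ (e i)) := by
  classical
  -- `κ ≃ ι ⊕ (range e)ᶜ`, and the map is the projection onto the first factor.
  let f : ι ⊕ ↥(Set.range e)ᶜ ≃ κ :=
    (Equiv.sumCongr (Equiv.ofInjective e he) (Equiv.refl _)).trans (Equiv.Set.sumCompl _)
  exact (measurePreserving_fst.comp (measurePreserving_sumPiEquivProdPi fun i => μ (f i))).comp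
    (measurePreserving_piCongrLeft μ f).symm

section finsetMax

variable {α β : Type*}

@[simp]
theorem finsetMax_empty (g : α → ℝ) : finsetMax ∅ g = 0 := rfl

theorem finsetMax_eq_sup' {I : Finset α} (hI : I.Nonempty) (g : α → ℝ) :
    finsetMax I g = I.sup' hI g := by
  rw [finsetMax, ← WithBot.unbotD_coe 0 (I.sup' hI g), Finset.coe_sup']
  rfl

theorem finsetMax_map (I : Finset α) (e : α ↪ β) (g : β → ℝ) :
    finsetMax (I.map e) g = finsetMax I (g ∘ e) := by
  rw [finsetMax, finsetMax, Finset.sup_map]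
  rfl

theorem abs_finsetMax_le {I : Finset α} (hI : I.Nonempty) {g : α → ℝ} {C : ℝ}
    (hg : ∀ i ∈ I, |g i| ≤ C) : |finsetMax I g| ≤ C := by
  obtain ⟨i, hi⟩ := hI
  rw [finsetMax_eq_sup' ⟨i, hi⟩, abs_le]
  exact ⟨(neg_le_of_abs_le (hg i hi)).trans (Finset.le_sup' g hi),
    Finset.sup'_le _ _ fun j hj => le_of_abs_le (hg j hj)⟩

variable {Ω : Type*} [MeasurableSpace Ω]

theorem measurable_finsetMax (I : Finset α) {f : α → Ω → ℝ} (hf : ∀ i, Measurable (f i)) :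
    Measurable fun ω => finsetMax I fun i => f i ω := by
  rcases I.eq_empty_or_nonempty with rfl | hI
  · exact measurable_const
  · simp_rw [finsetMax_eq_sup' hI, ← Finset.sup'_apply hI]
    exact Finset.measurable_sup' hI fun i _ => hf i

theorem integrable_finsetMax (ν : Measure Ω) [IsFiniteMeasure ν] (I : Finset α)
    {f : α → Ω → ℝ} (hf : ∀ i, Measurable (f i)) {C : ℝ} (hC : ∀ i ω, |f i ω| ≤ C) :
    Integrable (fun ω => finsetMax I fun i => f i ω) ν := by
  rcases I.eq_empty_or_nonempty with rfl | hI
  · simp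
  · exact .of_bound (measurable_finsetMax I hf).aestronglyMeasurable C
      (ae_of_all _ fun ω => abs_finsetMax_le hI fun i _ => hC i ω)

end finsetMax

theorem integral_finsetMax_of_card_eq {X : Type*} [MeasurableSpace X]
    (μ : Measure X) [IsProbabilityMeasure μ] {g : X → ℝ} (hg : Measurable g)
    {n k : ℕ} {I : Finset (Fin n)} (hI : I.card = k) :
    ∫ x : Fin n → X, finsetMax I (fun i => g (x i)) ∂(Measure.pi fun _ => μ)
      = ∫ y : Fin k → X, finsetMax Finset.univ (fun i => g (y i)) ∂(Measure.pi fun _ => μ) := by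
  set e := I.orderEmbOfFin hI
  have hmp := measurePreserving_comp_of_injective (fun _ : Fin n => μ) e.injective
  rw [← Finset.map_orderEmbOfFin_univ I hI, ← hmp.map_eq,
    integral_map hmp.measurable.aemeasurable
      (measurable_finsetMax _ fun i => by fun_prop).aestronglyMeasurable]
  simp_rw [finsetMax_map]
  rfl

theorem average_subset_max_unbiased_maxgk_general {X : Type*} [MeasurableSpace X]
    (μ : Measure X) [IsProbabilityMeasure μ]
    (g : X → ℝ) (hg : Measurable g) (C : ℝ) (hbound : ∀ x, |g x| ≤ C)
    (n k : ℕ) (hkn : k ≤ n) :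
    ∫ x : Fin n → X,
        (1 / (n.choose k : ℝ)) *
          ∑ I ∈ Finset.powersetCard k (Finset.univ : Finset (Fin n)),
            finsetMax I (fun i => g (x i))
      ∂(Measure.pi fun _ : Fin n => μ)
      = ∫ y : Fin k → X, finsetMax (Finset.univ : Finset (Fin k)) (fun i => g (y i))
          ∂(Measure.pi fun _ : Fin k => μ) := by
  have hchoose : (n.choose k : ℝ) ≠ 0 := by exact_mod_cast (Nat.choose_pos hkn).ne'
  rw [integral_const_mul, integral_finsetSum _ fun I _ => integrable_finsetMax _ I
      (fun i => by fun_prop) fun i x => hbound (x i),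
    Finset.sum_congr rfl fun I hI =>
      integral_finsetMax_of_card_eq μ hg (Finset.mem_powersetCard.mp hI).2,
    Finset.sum_const, Finset.card_powersetCard, Finset.card_univ, Fintype.card_fin, nsmul_eq_mul]
  field_simp

/-- For a probability measure μ on X, a bounded measurable
g : X → ℝ, and 1 ≤ k ≤ n, the expectation over x ∈ Xⁿ (n-fold product of μ)
of (1/C(n,k)) ∑_{|I|=k} max_{i∈I} g(xᵢ) equals the expectation over
y ∈ X^k (k-fold product of μ) of max_{1≤i≤k} g(yᵢ), i.e. maxg@k. -/
theorem average_subset_max_unbiased_maxgk {X : Type*} [MeasurableSpace X]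
    (μ : Measure X) [IsProbabilityMeasure μ]
    (g : X → ℝ) (hg : Measurable g) (C : ℝ) (hbound : ∀ x, |g x| ≤ C)
    (n k : ℕ) (hk : 1 ≤ k) (hkn : k ≤ n) :
    ∫ x : Fin n → X,
        (1 / (n.choose k : ℝ)) *
          ∑ I ∈ Finset.powersetCard k (Finset.univ : Finset (Fin n)),
            finsetMax I (fun i => g (x i))
      ∂(Measure.pi fun _ : Fin n => μ)
      = ∫ y : Fin k → X, finsetMax (Finset.univ : Finset (Fin k)) (fun i => g (y i))
          ∂(Measure.pi fun _ : Fin k => μ) :=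
  average_subset_max_unbiased_maxgk_general μ g hg C hbound n k hkn
end

section
/- Let n, k be natural numbers with 1 ≤ k ≤ n and let g₁ ≤ g₂ ≤ ··· ≤ gₙ be real numbers indexed by {1,...,n}. For each i ∈ {1,...,n}, define s_i = (1/C(n,k)) · ∑_{I ⊆ {1,...,n}, |I| = k, i ∈ I} max_{j∈I} g_j. Then s_i = (1/C(n,k)) · ∑_{j=i}^{n} m_{ij} · g_j, where m_{ii} = C(i−1, k−1) if i ≥ k and 0 otherwise, and for j > i: m_{ij} = C(j−2, k−2) if j ≥ k and k ≥ 2, and 0 otherwise. -/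
/-- The matrix entries m_{ij}: m_{ii} = C(i−1, k−1) if i ≥ k and 0 otherwise;
for j > i, m_{ij} = C(j−2, k−2) if j ≥ k and k ≥ 2, and 0 otherwise. -/
noncomputable def mCoef (k i j : ℕ) : ℝ :=
  if j = i then (if k ≤ i then ((i - 1).choose (k - 1) : ℝ) else 0)
  else if i < j then (if k ≤ j ∧ 2 ≤ k then ((j - 2).choose (k - 2) : ℝ) else 0)
  else 0

open Finset

theorem Finset.sup_id_eq_iff {α : Type*} [LinearOrder α] [OrderBot α] {I : Finset α} {j : α}
    (hI : I.Nonempty) : I.sup id = j ↔ j ∈ I ∧ ∀ x ∈ I, x ≤ j := by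
  constructor
  · rintro rfl
    obtain ⟨m, hm, hsup⟩ := exists_mem_eq_sup I hI id
    exact ⟨hsup ▸ hm, fun x hx => le_sup (f := id) hx⟩
  · rintro ⟨hj, hle⟩
    exact le_antisymm (Finset.sup_le hle) (le_sup (f := id) hj)

theorem finsetMax_eq_apply_sup_id {α : Type*} [LinearOrder α] [OrderBot α] {I : Finset α}
    {g : α → ℝ} (hg : MonotoneOn g I) (hI : I.Nonempty) : finsetMax I g = g (I.sup id) := by
  have hmem : I.sup id ∈ I := ((sup_id_eq_iff hI).1 rfl).1
  rw [finsetMax, show (I.sup fun a => ((g a : ℝ) : WithBot ℝ)) = ((I.sup' hI g : ℝ) : WithBot ℝ)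
    from (coe_sup' hI g).symm, WithBot.unbotD_coe]
  exact le_antisymm (sup'_le hI g fun x hx => hg hx hmem (le_sup (f := id) hx)) (le_sup' g hmem)

theorem filter_mem_sup_id_eq {a n k i j : ℕ} (hjn : j ≤ n) :
    {I ∈ (Icc a n).powersetCard k | i ∈ I ∧ I.sup id = j}
      = {I ∈ (Icc a j).powersetCard k | {i, j} ⊆ I} := by
  ext I
  simp only [mem_filter, mem_powersetCard, insert_subset_iff, singleton_subset_iff]
  constructor
  · rintro ⟨⟨hIn, hcard⟩, hi, hsup⟩
    obtain ⟨hj, hle⟩ := (sup_id_eq_iff ⟨i, hi⟩).1 hsup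
    exact ⟨⟨fun x hx => mem_Icc.2 ⟨(mem_Icc.1 (hIn hx)).1, hle x hx⟩, hcard⟩, hi, hj⟩
  · rintro ⟨⟨hIj, hcard⟩, hi, hj⟩
    refine ⟨⟨hIj.trans (Icc_subset_Icc_right hjn), hcard⟩, hi, ?_⟩
    exact (sup_id_eq_iff ⟨i, hi⟩).2 ⟨hj, fun x hx => (mem_Icc.1 (hIj hx)).2⟩

theorem sum_filter_mem_finsetMax (a n k i : ℕ) {g : ℕ → ℝ} (hg : MonotoneOn g (Icc a n)) :
    ∑ I ∈ (powersetCard k (Icc a n)).filter (fun I => i ∈ I), finsetMax I g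
      = ∑ j ∈ Icc i n, (#{I ∈ (Icc a j).powersetCard k | {i, j} ⊆ I} : ℝ) * g j := by
  have hsub : ∀ I ∈ (powersetCard k (Icc a n)).filter (fun I => i ∈ I), I ⊆ Icc a n :=
    fun I hI => (mem_powersetCard.1 (mem_filter.1 hI).1).1
  have hmaps : ∀ I ∈ (powersetCard k (Icc a n)).filter (fun I => i ∈ I), I.sup id ∈ Icc i n := by
    intro I hI
    have hi := (mem_filter.1 hI).2
    exact mem_Icc.2 ⟨le_sup (f := id) hi, Finset.sup_le fun x hx => (mem_Icc.1 (hsub I hI hx)).2⟩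
  rw [sum_congr rfl fun I hI =>
      finsetMax_eq_apply_sup_id (hg.mono (hsub I hI)) ⟨i, (mem_filter.1 hI).2⟩,
    ← sum_fiberwise_of_maps_to hmaps]
  refine sum_congr rfl fun j hj => ?_
  rw [filter_filter, sum_congr rfl fun I hI => congrArg g (mem_filter.1 hI).2.2, sum_const,
    nsmul_eq_mul, filter_mem_sup_id_eq (mem_Icc.1 hj).2]

theorem card_filter_pair_subset_eq_mCoef {k i j : ℕ} (hk : 1 ≤ k) (hi : 1 ≤ i) (hij : i ≤ j) :
    (#{I ∈ (Icc 1 j).powersetCard k | {i, j} ⊆ I} : ℝ) = mCoef k i j := by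
  have hsub : {i, j} ⊆ Icc 1 j := by
    intro x hx; simp only [mem_insert, mem_singleton] at hx; rw [mem_Icc]; omega
  rcases hij.eq_or_lt with rfl | hlt
  · rw [card_filter_powersetCard_subset _ _ _ hsub (by simpa using hk),
      insert_eq_of_mem (mem_singleton_self i), card_singleton, Nat.card_Icc, mCoef, if_pos rfl]
    split_ifs with hki
    · simp
    · rw [Nat.choose_eq_zero_of_lt (by omega), Nat.cast_zero]
  · rw [mCoef, if_neg hlt.ne', if_pos hlt]
    by_cases h2k : 2 ≤ k
    · rw [card_filter_powersetCard_subset _ _ _ hsub (by rw [card_pair hlt.ne]; exact h2k),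
        card_pair hlt.ne, Nat.card_Icc]
      split_ifs with hkj
      · simp
      · rw [Nat.choose_eq_zero_of_lt (by omega), Nat.cast_zero]
    · rw [if_neg fun h => h2k h.2, Nat.cast_eq_zero, card_eq_zero, filter_eq_empty_iff]
      intro I hI hpair
      have := card_le_card hpair
      rw [card_pair hlt.ne, (mem_powersetCard.1 hI).2] at this
      exact h2k this

theorem s_eq_weighted_sum_general (n k : ℕ) (hk : 1 ≤ k)
    (g : ℕ → ℝ) (hg : ∀ i ∈ Finset.Icc 1 n, ∀ j ∈ Finset.Icc 1 n, i ≤ j → g i ≤ g j)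
    (i : ℕ) (hi : i ∈ Finset.Icc 1 n) :
    (1 / (n.choose k : ℝ)) *
        ∑ I ∈ (Finset.powersetCard k (Finset.Icc 1 n)).filter (fun I => i ∈ I),
          finsetMax I g
      = (1 / (n.choose k : ℝ)) * ∑ j ∈ Finset.Icc i n, mCoef k i j * g j := by
  rw [sum_filter_mem_finsetMax 1 n k i hg]
  congr 1
  refine sum_congr rfl fun j hj => ?_
  rw [card_filter_pair_subset_eq_mCoef hk (mem_Icc.1 hi).1 (mem_Icc.1 hj).1]

/-- For 1 ≤ k ≤ n and sorted reals g₁ ≤ ⋯ ≤ gₙ indexed by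
{1,...,n}, the quantity s_i = (1/C(n,k)) ∑_{|I|=k, i∈I} max_{j∈I} g_j equals
(1/C(n,k)) ∑_{j=i}^{n} m_{ij} g_j. -/
theorem s_eq_weighted_sum (n k : ℕ) (hk : 1 ≤ k) (hkn : k ≤ n)
    (g : ℕ → ℝ) (hg : ∀ i ∈ Finset.Icc 1 n, ∀ j ∈ Finset.Icc 1 n, i ≤ j → g i ≤ g j)
    (i : ℕ) (hi : i ∈ Finset.Icc 1 n) :
    (1 / (n.choose k : ℝ)) *
        ∑ I ∈ (Finset.powersetCard k (Finset.Icc 1 n)).filter (fun I => i ∈ I),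
          finsetMax I g
      = (1 / (n.choose k : ℝ)) * ∑ j ∈ Finset.Icc i n, mCoef k i j * g j :=
  s_eq_weighted_sum_general n k hk g hg i hi
end

section
/- Let n, k be natural numbers with 1 ≤ k ≤ n and let g₁ ≤ g₂ ≤ ··· ≤ gₙ be real numbers indexed by {1,...,n}. Define s_i = (1/C(n,k)) · ∑_{I ⊆ {1,...,n}, |I| = k, i ∈ I} max_{j∈I} g_j, and define m_{ii} = C(i−1, k−1) if i ≥ k and 0 otherwise, and for j > i, m_{ij} = C(j−2, k−2) if j ≥ k and k ≥ 2, and 0 otherwise. Then s_n = C(n−1, k−1)·g_n / C(n,k), and for every 1 ≤ i < n: s_i = s_{i+1} + (1/C(n,k)) · ( g_i·m_{ii} + g_{i+1}·(m_{i,i+1} − m_{i+1,i+1}) ). -/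
/-- s_i = (1/C(n,k)) ∑_{I ⊆ {1,...,n}, |I| = k, i ∈ I} max_{j∈I} g_j. -/
noncomputable def sVal (n k : ℕ) (g : ℕ → ℝ) (i : ℕ) : ℝ :=
  (1 / (n.choose k : ℝ)) *
    ∑ I ∈ (Finset.powersetCard k (Finset.Icc 1 n)).filter (fun I => i ∈ I),
      finsetMax I g

open Finset

section Swap

variable {α : Type*} [DecidableEq α]

lemma card_filter_mem_powersetCard {s : Finset α} {a : α} (ha : a ∈ s) {k : ℕ} (hk : 1 ≤ k) :
    #((powersetCard k s).filter (a ∈ ·)) = (#s - 1).choose (k - 1) := by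
  simpa using card_filter_powersetCard_subset {a} s k (singleton_subset_iff.2 ha) (by simpa)

lemma map_swap_subset {s I : Finset α} {a b : α} (hI : I ⊆ s) (ha : a ∈ s) (hb : b ∈ s) :
    I.map (Equiv.swap a b).toEmbedding ⊆ s := by
  intro x hx
  rw [mem_map_equiv, Equiv.symm_swap] at hx
  rcases eq_or_ne x a with rfl | hxa
  · exact ha
  rcases eq_or_ne x b with rfl | hxb
  · exact hb
  rw [Equiv.swap_apply_of_ne_of_ne hxa hxb] at hx
  exact hI hx

lemma map_swap_map_swap (I : Finset α) (a b : α) :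
    (I.map (Equiv.swap a b).toEmbedding).map (Equiv.swap a b).toEmbedding = I := by
  ext x
  simp [mem_map_equiv]

lemma sum_filter_mem_powersetCard_eq_sum_map_swap {β : Type*} [AddCommMonoid β] {s : Finset α}
    {a b : α} (ha : a ∈ s) (hb : b ∈ s) (k : ℕ) (f : Finset α → β) :
    ∑ I ∈ (powersetCard k s).filter (b ∈ ·), f I =
      ∑ I ∈ (powersetCard k s).filter (a ∈ ·), f (I.map (Equiv.swap a b).toEmbedding) := by
  symm
  refine sum_nbij' (·.map (Equiv.swap a b).toEmbedding) (·.map (Equiv.swap a b).toEmbedding)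
    ?_ ?_ (fun I _ => map_swap_map_swap I a b) (fun I _ => map_swap_map_swap I a b)
    (fun _ _ => rfl)
  all_goals
    intro I hI
    simp only [mem_filter, mem_powersetCard] at hI ⊢
    refine ⟨⟨map_swap_subset hI.1.1 ha hb, by rw [card_map, hI.1.2]⟩, ?_⟩
    simp [mem_map_equiv, hI.2]

end Swap

lemma finsetMax_eq_of_mem_of_forall_le {α : Type*} {I : Finset α} {g : α → ℝ} {j : α}
    (hj : j ∈ I) (hle : ∀ x ∈ I, g x ≤ g j) : finsetMax I g = g j := by
  have hsup : (I.sup fun a => ((g a : ℝ) : WithBot ℝ)) = I.sup' ⟨j, hj⟩ g := (coe_sup' _ g).symm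
  rw [finsetMax, hsup, WithBot.unbotD_coe]
  exact le_antisymm (sup'_le _ _ hle) (le_sup' g hj)

lemma finsetMax_eq_of_monotoneOn {α : Type*} [Preorder α] {g : α → ℝ} {s I : Finset α}
    (hg : MonotoneOn g s) (hI : I ⊆ s) {j : α} (hj : j ∈ I) (hle : ∀ x ∈ I, x ≤ j) :
    finsetMax I g = g j :=
  finsetMax_eq_of_mem_of_forall_le hj fun x hx => hg (hI hx) (hI hj) (hle x hx)

lemma le_of_mem_map_swap {I : Finset ℕ} {i M : ℕ} (hiM : i < M) (hle : ∀ x ∈ I, x ≤ M) :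
    ∀ y ∈ I.map (Equiv.swap i (i + 1)).toEmbedding, y ≤ M := by
  intro y hy
  rw [mem_map_equiv, Equiv.symm_swap, Equiv.swap_apply_def] at hy
  split_ifs at hy with h1 h2
  · have := hle _ hy; omega
  · omega
  · exact hle _ hy

lemma finsetMax_sub_finsetMax_map_swap {g : ℕ → ℝ} {s I : Finset ℕ} {i : ℕ}
    (hg : MonotoneOn g s) (hI : I ⊆ s) (hi : i ∈ I) (hi1 : i + 1 ∈ s) :
    finsetMax I g - finsetMax (I.map (Equiv.swap i (i + 1)).toEmbedding) g =
      if ∀ x ∈ I, x ≤ i then g i - g (i + 1) else 0 := by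
  have hJ := map_swap_subset hI (hI hi) hi1
  split_ifs with hle
  · have hi1J : i + 1 ∈ I.map (Equiv.swap i (i + 1)).toEmbedding := by simp [mem_map_equiv, hi]
    rw [finsetMax_eq_of_monotoneOn hg hI hi hle, finsetMax_eq_of_monotoneOn hg hJ hi1J
      (le_of_mem_map_swap (lt_add_one i) fun x hx => (hle x hx).trans (Nat.le_succ i))]
  · obtain ⟨x, hx, hix⟩ : ∃ x ∈ I, i < x := by simpa using hle
    set M := I.max' ⟨i, hi⟩
    have hiM : i < M := hix.trans_le (le_max' I x hx)
    have hMJ : M ∈ I.map (Equiv.swap i (i + 1)).toEmbedding := by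
      rw [mem_map_equiv, Equiv.symm_swap, Equiv.swap_apply_def]
      split_ifs with h1 h2
      · omega
      · exact hi
      · exact max'_mem I _
    have hle : ∀ y ∈ I, y ≤ M := fun y hy => le_max' I y hy
    rw [finsetMax_eq_of_monotoneOn hg hI (max'_mem I _) hle,
      finsetMax_eq_of_monotoneOn hg hJ hMJ (le_of_mem_map_swap hiM hle), sub_self]

lemma filter_powersetCard_Icc_forall_le {i n : ℕ} (hin : i ≤ n) (k : ℕ) :
    (powersetCard k (Icc 1 n)).filter (fun I => ∀ x ∈ I, x ≤ i) = powersetCard k (Icc 1 i) := by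
  ext I
  simp only [mem_filter, mem_powersetCard, subset_iff, mem_Icc]
  grind

lemma mCoef_self {k i : ℕ} (hi : 1 ≤ i) : mCoef k i i = (i - 1).choose (k - 1) := by
  rw [mCoef, if_pos rfl]
  split_ifs with h
  · rfl
  · rw [Nat.choose_eq_zero_of_lt (by omega), Nat.cast_zero]

lemma mCoef_succ_self (k i : ℕ) :
    mCoef k (i + 1) (i + 1) = mCoef k i (i + 1) + (i - 1).choose (k - 1) := by
  have hne : i + 1 ≠ i := by omega
  simp only [mCoef, hne, if_false, lt_add_one, if_true]
  split_ifs with hki hk2 hk2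
  · obtain ⟨j, rfl⟩ : ∃ j, i = j + 1 := ⟨i - 1, by omega⟩
    obtain ⟨l, rfl⟩ : ∃ l, k = l + 2 := ⟨k - 2, by omega⟩
    simp [Nat.choose_succ_succ]
  · simp [(by omega : k - 1 = 0)]
  · exact absurd hk2.1 hki
  · rw [Nat.choose_eq_zero_of_lt (by omega)]
    simp

/-- For 1 ≤ k ≤ n and sorted reals g₁ ≤ ⋯ ≤ gₙ indexed by
{1,...,n}, we have s_n = C(n−1, k−1)·g_n / C(n,k), and for 1 ≤ i < n the
right-to-left recursion
s_i = s_{i+1} + (1/C(n,k))·(g_i·m_{ii} + g_{i+1}·(m_{i,i+1} − m_{i+1,i+1})). -/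
theorem s_recursion (n k : ℕ) (hk : 1 ≤ k) (hkn : k ≤ n)
    (g : ℕ → ℝ) (hg : ∀ i ∈ Finset.Icc 1 n, ∀ j ∈ Finset.Icc 1 n, i ≤ j → g i ≤ g j) :
    sVal n k g n = ((n - 1).choose (k - 1) : ℝ) * g n / (n.choose k : ℝ)
    ∧ ∀ i : ℕ, 1 ≤ i → i < n →
        sVal n k g i = sVal n k g (i + 1) +
          (1 / (n.choose k : ℝ)) *
            (g i * mCoef k i i + g (i + 1) * (mCoef k i (i + 1) - mCoef k (i + 1) (i + 1))) := by
  have hmono : MonotoneOn g (Icc 1 n : Set ℕ) := fun a ha b hb hab => hg a ha b hb hab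
  have hn : n ∈ Icc 1 n := right_mem_Icc.2 (hk.trans hkn)
  constructor
  · have hmax : ∀ I ∈ (powersetCard k (Icc 1 n)).filter (n ∈ ·), finsetMax I g = g n :=
      fun I hI => by
        simp only [mem_filter, mem_powersetCard] at hI
        exact finsetMax_eq_of_monotoneOn hmono hI.1.1 hI.2 fun x hx => (mem_Icc.1 (hI.1.1 hx)).2
    rw [sVal, sum_congr rfl hmax, sum_const, card_filter_mem_powersetCard hn hk, Nat.card_Icc,
      nsmul_eq_mul, add_tsub_cancel_right]
    ring
  · intro i hi hin
    have hiI : i ∈ Icc 1 n := mem_Icc.2 ⟨hi, hin.le⟩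
    have hi1I : i + 1 ∈ Icc 1 n := mem_Icc.2 ⟨by omega, hin⟩
    have hdiff : ∑ I ∈ (powersetCard k (Icc 1 n)).filter (i ∈ ·), finsetMax I g
        - ∑ I ∈ (powersetCard k (Icc 1 n)).filter (i + 1 ∈ ·), finsetMax I g
        = (i - 1).choose (k - 1) * (g i - g (i + 1)) := by
      rw [sum_filter_mem_powersetCard_eq_sum_map_swap hiI hi1I, ← sum_sub_distrib,
        sum_congr rfl fun I hI => finsetMax_sub_finsetMax_map_swap hmono
          (mem_powersetCard.1 (mem_filter.1 hI).1).1 (mem_filter.1 hI).2 hi1I,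
        sum_ite, sum_const_zero, add_zero, sum_const, nsmul_eq_mul, filter_comm,
        filter_powersetCard_Icc_forall_le hin.le,
        card_filter_mem_powersetCard (right_mem_Icc.2 hi) hk, Nat.card_Icc, add_tsub_cancel_right]
    rw [sVal, sVal, mCoef_self hi, mCoef_succ_self]
    linear_combination (1 / (n.choose k : ℝ)) * hdiff
end

section
/- Fix a natural number n ≥ 1 and a function h : ℝ → ℝ. There exists a function T : (Fin n → Bool) → ℝ such that for every p ∈ [0,1], ∑_{ω : Fin n → Bool} T(ω) · p^{N(ω)} · (1−p)^{n−N(ω)} = h(p), where N(ω) = #{i : ω(i) = true}, if and only if there exists a real polynomial P of degree at most n with P(p) = h(p) for all p ∈ [0,1]. In other words, a function of the Bernoulli parameter p is unbiasedly estimable from n i.i.d. Bernoulli(p) samples if and only if it is a polynomial in p of degree at most n. -/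
open Polynomial Finset

/-- Group a sum over Boolean tuples by the number of `true`s. -/
lemma group_sum_bool (n : ℕ) (F : ℕ → ℝ) :
    ∑ ω : Fin n → Bool, F (Finset.univ.filter fun i => ω i = true).card
      = ∑ m ∈ Finset.range (n + 1), (n.choose m : ℝ) * F m := by
  have h1 : ∑ ω : Fin n → Bool, F (Finset.univ.filter fun i => ω i = true).card
      = ∑ s : Finset (Fin n), F s.card := by
    refine (Fintype.sum_bijective (fun (s : Finset (Fin n)) (i : Fin n) => decide (i ∈ s))
      ?_ (fun s => F s.card)
      (fun ω => F (Finset.univ.filter fun i => ω i = true).card) ?_).symm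
    · refine Function.bijective_iff_has_inverse.mpr
        ⟨fun ω => Finset.univ.filter fun i => ω i = true, fun s => by ext i; simp,
          fun ω => by funext i; simp⟩
    · intro s
      congr 1
      have : (Finset.univ.filter fun i => decide (i ∈ s) = true) = s := by ext i; simp
      rw [this]
  rw [h1]
  have h2 : (Finset.univ : Finset (Finset (Fin n))) = (Finset.univ : Finset (Fin n)).powerset :=
    (Finset.powerset_univ).symm
  rw [h2, Finset.sum_powerset_apply_card]
  simp [nsmul_eq_mul]

/-- The key identity: a single monomial `p^k` is an expectation of a Bernstein-type sum. -/
lemma monomial_expand (n k : ℕ) (hk : k ≤ n) (p : ℝ) :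
    ∑ m ∈ Finset.range (n + 1),
        (if k ≤ m then ((n - k).choose (m - k) : ℝ) else 0) * p ^ m * (1 - p) ^ (n - m)
      = p ^ k := by
  have step1 : ∑ m ∈ Finset.range (n + 1),
        (if k ≤ m then ((n - k).choose (m - k) : ℝ) else 0) * p ^ m * (1 - p) ^ (n - m)
      = ∑ m ∈ Finset.Ico k (n + 1), ((n - k).choose (m - k) : ℝ) * p ^ m * (1 - p) ^ (n - m) := by
    rw [Finset.range_eq_Ico, ← Finset.sum_Ico_consecutive _ (Nat.zero_le k)
      (by omega : k ≤ n + 1)]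
    have z : ∑ m ∈ Finset.Ico 0 k,
        (if k ≤ m then ((n - k).choose (m - k) : ℝ) else 0) * p ^ m * (1 - p) ^ (n - m) = 0 :=
      Finset.sum_eq_zero fun m hm => by
        rw [Finset.mem_Ico] at hm; simp [Nat.not_le.mpr hm.2]
    rw [z, zero_add]
    exact Finset.sum_congr rfl fun m hm => by
      rw [Finset.mem_Ico] at hm; simp [hm.1]
  rw [step1, Finset.sum_Ico_eq_sum_range]
  have hrange : n + 1 - k = n - k + 1 := by omega
  rw [hrange]
  have expand : (p + (1 - p)) ^ (n - k)
      = ∑ j ∈ Finset.range (n - k + 1), p ^ j * (1 - p) ^ (n - k - j) * ((n - k).choose j : ℝ) :=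
    add_pow p (1 - p) (n - k)
  have hone : p + (1 - p) = 1 := by ring
  have : p ^ k = p ^ k * (p + (1 - p)) ^ (n - k) := by rw [hone, one_pow, mul_one]
  rw [this, expand, Finset.mul_sum]
  refine Finset.sum_congr rfl fun j hj => ?_
  rw [Finset.mem_range] at hj
  have h1 : k + j - k = j := by omega
  have h2 : n - (k + j) = n - k - j := by omega
  rw [h1, h2, pow_add]
  ring

/-- Kolmogorov: For n ≥ 1 and h : ℝ → ℝ, there exists an
unbiased estimator T : (Fin n → Bool) → ℝ of h(p) from n i.i.d. Bernoulli(p)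
samples, i.e. ∑_ω T(ω)·p^{N(ω)}·(1−p)^{n−N(ω)} = h(p) for all p ∈ [0,1] where
N(ω) counts successes, if and only if h agrees on [0,1] with a real polynomial
of degree at most n. -/
theorem bernoulli_unbiased_estimable_iff_polynomial (n : ℕ) (hn : 1 ≤ n) (h : ℝ → ℝ) :
    (∃ T : (Fin n → Bool) → ℝ, ∀ p ∈ Set.Icc (0 : ℝ) 1,
        ∑ ω : Fin n → Bool,
          T ω * p ^ (Finset.univ.filter fun i => ω i = true).card *
            (1 - p) ^ (n - (Finset.univ.filter fun i => ω i = true).card)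
          = h p)
    ↔ (∃ P : Polynomial ℝ, P.degree ≤ n ∧ ∀ p ∈ Set.Icc (0 : ℝ) 1, P.eval p = h p) := by
  constructor
  · rintro ⟨T, hT⟩
    refine ⟨∑ ω : Fin n → Bool,
      Polynomial.C (T ω) * X ^ (Finset.univ.filter fun i => ω i = true).card *
        (1 - X) ^ (n - (Finset.univ.filter fun i => ω i = true).card), ?_, ?_⟩
    · refine le_trans (Polynomial.degree_sum_le _ _) ?_
      rw [Finset.sup_le_iff]
      intro ω _
      set k := (Finset.univ.filter fun i => ω i = true).card with hkdef
      have hk : k ≤ n := by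
        calc k ≤ (Finset.univ : Finset (Fin n)).card := Finset.card_filter_le _ _
        _ = n := by simp
      refine le_trans (Polynomial.degree_mul_le _ _) ?_
      have d1 : (Polynomial.C (T ω) * X ^ k).degree ≤ (k : WithBot ℕ) := by
        refine le_trans (Polynomial.degree_mul_le _ _) ?_
        calc (Polynomial.C (T ω)).degree + (X ^ k : ℝ[X]).degree
            ≤ 0 + (k : WithBot ℕ) := by
              exact add_le_add Polynomial.degree_C_le (Polynomial.degree_X_pow_le k)
          _ = (k : WithBot ℕ) := by rw [zero_add]
      have d2 : ((1 - X : ℝ[X]) ^ (n - k)).degree ≤ ((n - k : ℕ) : WithBot ℕ) := by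
        refine le_trans (Polynomial.degree_pow_le _ _) ?_
        have : (1 - X : ℝ[X]).degree ≤ 1 := by
          refine le_trans (Polynomial.degree_sub_le _ _) ?_
          simp [Polynomial.degree_one, Polynomial.degree_X]
        calc ((n - k) : ℕ) • (1 - X : ℝ[X]).degree ≤ ((n - k) : ℕ) • (1 : WithBot ℕ) :=
              nsmul_le_nsmul_right this _
          _ = ((n - k : ℕ) : WithBot ℕ) := by
              simp [nsmul_eq_mul, mul_one]
      calc (Polynomial.C (T ω) * X ^ k).degree + ((1 - X : ℝ[X]) ^ (n - k)).degree
          ≤ (k : WithBot ℕ) + ((n - k : ℕ) : WithBot ℕ) := add_le_add d1 d2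
        _ = ((k + (n - k) : ℕ) : WithBot ℕ) := by rw [Nat.cast_add]
        _ = (n : WithBot ℕ) := by rw [Nat.add_sub_cancel' hk]
    · intro p hp
      rw [← hT p hp]
      simp [Polynomial.eval_finset_sum]
  · rintro ⟨P, hPdeg, hPeval⟩
    have hnat : P.natDegree ≤ n := Polynomial.natDegree_le_iff_degree_le.mpr hPdeg
    refine ⟨fun ω => ∑ k ∈ Finset.range (n + 1), P.coeff k *
      (if k ≤ (Finset.univ.filter fun i => ω i = true).card then
        (((n - k).choose ((Finset.univ.filter fun i => ω i = true).card - k) : ℝ) /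
          (n.choose ((Finset.univ.filter fun i => ω i = true).card) : ℝ)) else 0), ?_⟩
    intro p hp
    rw [← hPeval p hp]
    have key : ∑ ω : Fin n → Bool,
        (∑ k ∈ Finset.range (n + 1), P.coeff k *
          (if k ≤ (Finset.univ.filter fun i => ω i = true).card then
            (((n - k).choose ((Finset.univ.filter fun i => ω i = true).card - k) : ℝ) /
              (n.choose ((Finset.univ.filter fun i => ω i = true).card) : ℝ)) else 0))
          * p ^ (Finset.univ.filter fun i => ω i = true).card *
            (1 - p) ^ (n - (Finset.univ.filter fun i => ω i = true).card)
      = ∑ m ∈ Finset.range (n + 1), (n.choose m : ℝ) *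
          ((∑ k ∈ Finset.range (n + 1), P.coeff k *
            (if k ≤ m then (((n - k).choose (m - k) : ℝ) / (n.choose m : ℝ)) else 0))
            * p ^ m * (1 - p) ^ (n - m)) := by
      exact group_sum_bool n (fun m => (∑ k ∈ Finset.range (n + 1), P.coeff k *
        (if k ≤ m then (((n - k).choose (m - k) : ℝ) / (n.choose m : ℝ)) else 0))
          * p ^ m * (1 - p) ^ (n - m))
    rw [key]
    have step : ∀ m ∈ Finset.range (n + 1), (n.choose m : ℝ) *
          ((∑ k ∈ Finset.range (n + 1), P.coeff k *
            (if k ≤ m then (((n - k).choose (m - k) : ℝ) / (n.choose m : ℝ)) else 0))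
            * p ^ m * (1 - p) ^ (n - m))
        = ∑ k ∈ Finset.range (n + 1), P.coeff k *
            ((if k ≤ m then ((n - k).choose (m - k) : ℝ) else 0) * p ^ m * (1 - p) ^ (n - m)) := by
      intro m hm
      rw [Finset.mem_range, Nat.lt_succ_iff] at hm
      have hchoose : (n.choose m : ℝ) ≠ 0 := by
        exact_mod_cast (Nat.choose_pos hm).ne'
      rw [Finset.sum_mul, Finset.sum_mul, Finset.mul_sum]
      refine Finset.sum_congr rfl fun k _ => ?_
      by_cases hkm : k ≤ m
      · simp only [hkm, if_true]
        field_simp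
      · simp [hkm]
    rw [Finset.sum_congr rfl step, Finset.sum_comm]
    have inner : ∀ k ∈ Finset.range (n + 1),
        ∑ m ∈ Finset.range (n + 1), P.coeff k *
            ((if k ≤ m then ((n - k).choose (m - k) : ℝ) else 0) * p ^ m * (1 - p) ^ (n - m))
          = P.coeff k * p ^ k := by
      intro k hk
      rw [Finset.mem_range, Nat.lt_succ_iff] at hk
      rw [← Finset.mul_sum]
      congr 1
      rw [← monomial_expand n k hk p]
    rw [Finset.sum_congr rfl inner]
    exact (Polynomial.eval_eq_sum_range' (Nat.lt_succ_of_le hnat) p).symm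
end
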